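/- Let G ∈ ℝ^{M×M} be invertible, let Λ = {Gᵀz : z ∈ ℤ^M} be the full-rank lattice generated by the columns of Gᵀ, and let s_1,…,s_M ∈ Λ be linearly independent vectors that are Korkin–Zolotarev reduced: for every i = 1,…,M, (i) P_i(s_i) is a shortest nonzero vector in P_i(Λ) — for every v ∈ Λ with P_i(v) ≠ 0, ‖P_i(s_i)‖ ≤ ‖P_i(v)‖ — and (ii) |s_jᵀ·s_i*| / ‖s_i*‖² ≤ 1/2 for all j > i, where P_i denotes orthogonal projection onto the orthogonal complement of span(s_1,…,s_{i−1}) and s_i* = P_i(s_i). Then s_1,…,s_M form a basis of Λ: every element of Λ is an integer linear combination of s_1,…,s_M. -/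

import Mathlib

open RealInnerProductSpace

/-- View a plain vector in `Fin M → ℝ` as an element of Euclidean space. -/
noncomputable def toE {M : ℕ} (v : Fin M → ℝ) : EuclideanSpace ℝ (Fin M) :=
  (EuclideanSpace.equiv (Fin M) ℝ).symm v

/-- `projPerp s i x` is the orthogonal projection of `x` onto the orthogonal complement of
`span(s_1, …, s_{i-1})`. -/
noncomputable def projPerp {M : ℕ} (s : Fin M → EuclideanSpace ℝ (Fin M)) (i : Fin M)
    (x : EuclideanSpace ℝ (Fin M)) : EuclideanSpace ℝ (Fin M) :=
  (Submodule.orthogonalProjectionOnto (Submodule.span ℝ (s '' {j | j < i}))ᗮ x : EuclideanSpace ℝ (Fin M))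

/-!
Write `v = ∑ k, c k • s k`. If some `c k` is not an integer, let `i` be the largest such index
and subtract the lattice vector `∑_{k ≥ i} round (c k) • s k` from `v`. The difference lies in
`Λ`, and since `P[s, i]` kills `s k` for `k < i`, its projection is
`(c i - round (c i)) • P[s, i] (s i)`: nonzero, yet at most half as long as `P[s, i] (s i)`,
contradicting KZ condition (i).
-/

open Submodule

local notation "P[" s ", " i "]" => starProjection (span ℝ (s '' Set.Iio i))ᗮ

section KorkinZolotarev

variable {ι E : Type*} [LinearOrder ι] [NormedAddCommGroup E] [InnerProductSpace ℝ E]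
  [FiniteDimensional ℝ E] {s : ι → E}

theorem starProjection_orthogonal_span_lt_apply_of_lt {i j : ι} (hji : j < i) :
    P[s, i] (s j) = 0 :=
  starProjection_orthogonal_apply_eq_zero (subset_span ⟨j, hji, rfl⟩)

theorem starProjection_orthogonal_span_lt_apply_self_ne_zero (hs : LinearIndependent ℝ s)
    (i : ι) : P[s, i] (s i) ≠ 0 := by
  rw [Ne, starProjection_apply_eq_zero_iff, orthogonal_orthogonal]
  exact hs.notMem_span_image (lt_irrefl i)

theorem starProjection_orthogonal_span_lt_sum_smul [Fintype ι] {d : ι → ℝ} {i : ι}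
    (hd : ∀ k, i < k → d k = 0) : P[s, i] (∑ k, d k • s k) = d i • P[s, i] (s i) := by
  simp only [map_sum, map_smul]
  refine Finset.sum_eq_single i (fun k _ hki => ?_) (by simp)
  rcases hki.lt_or_gt with hki | hik
  · rw [starProjection_orthogonal_span_lt_apply_of_lt hki, smul_zero]
  · rw [hd k hik, zero_smul]

theorem eq_zero_of_sum_smul_mem_of_abs_lt_one [Fintype ι] {L : Set E}
    (hs : LinearIndependent ℝ s) {i : ι}
    (hmin : ∀ v ∈ L, P[s, i] v ≠ 0 → ‖P[s, i] (s i)‖ ≤ ‖P[s, i] v‖)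
    {d : ι → ℝ} (hd : ∀ k, i < k → d k = 0) (hdL : ∑ k, d k • s k ∈ L)
    (hdi : |d i| < 1) : d i = 0 := by
  have hsi := starProjection_orthogonal_span_lt_apply_self_ne_zero hs i
  by_contra hne
  have hle := hmin _ hdL <| by
    rw [starProjection_orthogonal_span_lt_sum_smul hd]
    exact smul_ne_zero hne hsi
  rw [starProjection_orthogonal_span_lt_sum_smul hd, norm_smul, Real.norm_eq_abs] at hle
  have := mul_lt_of_lt_one_left (norm_pos_iff.mpr hsi) hdi
  linarith

theorem exists_intCast_eq_of_sum_smul_mem [Fintype ι] (L : AddSubgroup E)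
    (hs : LinearIndependent ℝ s) (hsL : ∀ i, s i ∈ L)
    (hmin : ∀ i, ∀ v ∈ L, P[s, i] v ≠ 0 → ‖P[s, i] (s i)‖ ≤ ‖P[s, i] v‖)
    {c : ι → ℝ} (hc : ∑ k, c k • s k ∈ L) (k : ι) : ∃ m : ℤ, c k = m := by
  by_contra hk
  obtain ⟨i, hi, hmax⟩ := (Set.toFinite {k | ¬∃ m : ℤ, c k = m}).exists_maximal ⟨k, hk⟩
  set z : ι → ℤ := fun k => if i ≤ k then round (c k) else 0
  have hint : ∀ k, i < k → c k = round (c k) := by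
    intro k hik
    obtain ⟨m, hm⟩ := not_not.mp fun h => hik.not_ge (hmax h hik.le)
    rw [hm, round_intCast]
  have hdL : ∑ k, (c k - z k) • s k ∈ L := by
    simp only [sub_smul, Finset.sum_sub_distrib, Int.cast_smul_eq_zsmul]
    exact sub_mem hc (sum_mem fun k _ => zsmul_mem (hsL k) _)
  have hd : ∀ k, i < k → c k - z k = 0 := fun k hik => by
    simp [z, hik.le, ← hint k hik]
  have hdi : |c i - z i| < 1 := by
    simpa [z] using (abs_sub_round (c i)).trans_lt (by norm_num)
  have := eq_zero_of_sum_smul_mem_of_abs_lt_one hs (hmin i) hd hdL hdi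
  exact hi ⟨z i, sub_eq_zero.mp this⟩

end KorkinZolotarev

theorem kz_reduced_set_is_lattice_basis_general {M : ℕ}
    (G : Matrix (Fin M) (Fin M) ℝ)
    -- the full-rank lattice generated by the columns of Gᵀ
    (Λ : Set (EuclideanSpace ℝ (Fin M)))
    (hΛ : Λ = {v | ∃ z : Fin M → ℤ, v = toE ((G.transpose).mulVec (fun t => (z t : ℝ)))})
    -- linearly independent lattice vectors s_1, …, s_M
    (s : Fin M → EuclideanSpace ℝ (Fin M))
    (hsΛ : ∀ i, s i ∈ Λ)
    (hli : LinearIndependent ℝ s)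
    -- KZ condition (i): P_i(s_i) is a shortest nonzero vector of P_i(Λ)
    (hKZ1 : ∀ (i : Fin M), ∀ v ∈ Λ, projPerp s i v ≠ 0 →
      ‖projPerp s i (s i)‖ ≤ ‖projPerp s i v‖) :
    -- then s_1, …, s_M is a basis of Λ
    ∀ v ∈ Λ, ∃ c : Fin M → ℤ, v = ∑ k : Fin M, c k • s k := by
  intro v hv
  let toLattice : (Fin M → ℤ) →+ EuclideanSpace ℝ (Fin M) :=
    ((EuclideanSpace.equiv (Fin M) ℝ).symm.toLinearMap ∘ₗ
      G.transpose.mulVecLin).toAddMonoidHom.comp ((Int.castAddHom ℝ).compLeft (Fin M))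
  obtain rfl : Λ = toLattice.range := hΛ.trans <| Set.ext fun _ => exists_congr fun _ => eq_comm
  obtain ⟨c, rfl⟩ := (mem_span_range_iff_exists_fun ℝ).mp <|
    (hli.span_eq_top_of_card_eq_finrank' (by simp)).ge (mem_top (x := v))
  choose m hm using exists_intCast_eq_of_sum_smul_mem _ hli hsΛ hKZ1 hv
  exact ⟨m, by simp only [hm, Int.cast_smul_eq_zsmul]⟩

theorem kz_reduced_set_is_lattice_basis {M : ℕ}
    (G : Matrix (Fin M) (Fin M) ℝ) (hG : IsUnit G.det)
    -- the full-rank lattice generated by the columns of Gᵀ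
    (Λ : Set (EuclideanSpace ℝ (Fin M)))
    (hΛ : Λ = {v | ∃ z : Fin M → ℤ, v = toE ((G.transpose).mulVec (fun t => (z t : ℝ)))})
    -- linearly independent lattice vectors s_1, …, s_M
    (s : Fin M → EuclideanSpace ℝ (Fin M))
    (hsΛ : ∀ i, s i ∈ Λ)
    (hli : LinearIndependent ℝ s)
    -- KZ condition (i): P_i(s_i) is a shortest nonzero vector of P_i(Λ)
    (hKZ1 : ∀ (i : Fin M), ∀ v ∈ Λ, projPerp s i v ≠ 0 →
      ‖projPerp s i (s i)‖ ≤ ‖projPerp s i v‖)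
    -- KZ condition (ii): the Gram–Schmidt coefficients are at most 1/2 in magnitude
    (hKZ2 : ∀ i j : Fin M, i < j →
      |⟪s j, projPerp s i (s i)⟫| / ‖projPerp s i (s i)‖^2 ≤ 1/2) :
    -- then s_1, …, s_M is a basis of Λ
    ∀ v ∈ Λ, ∃ c : Fin M → ℤ, v = ∑ k : Fin M, c k • s k :=
  kz_reduced_set_is_lattice_basis_general G Λ hΛ s hsΛ hli hKZ1
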